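/- The trigamma function satisfies the subadditivity-type inequality 1/psi'(a) + 1/psi'(b) <= 1/psi'(a+b) for all a,b > 0, where psi' is the trigamma function. -/

import Mathlib

open Filter Set Topology Finset

-- summability of 1/(x+n)^2
lemma summable_sq (x : ℝ) (hx : 0 < x) : Summable (fun n : ℕ => 1 / (x + n) ^ 2) := by
  have hbase : Summable (fun n : ℕ => (1 : ℝ) / (n + 1) ^ 2) := by
    have := Real.summable_one_div_nat_pow.mpr (le_refl 2)
    rw [← summable_nat_add_iff 1] at this
    simpa using this
  apply Summable.of_nonneg_of_le (fun n => by positivity)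
    (fun n => ?_) (hbase.mul_left ((max 1 (1/x))^2))
  have hm : min x 1 * (n + 1) ≤ x + n := by
    rcases le_total x 1 with h | h
    · calc min x 1 * (n+1) ≤ x * (n+1) := by
            apply mul_le_mul_of_nonneg_right (min_le_left _ _); positivity
        _ ≤ x + n := by nlinarith [Nat.cast_nonneg (α := ℝ) n]
    · calc min x 1 * (n+1) ≤ 1 * (n+1) := by
            apply mul_le_mul_of_nonneg_right (min_le_right _ _); positivity
        _ ≤ x + n := by push_cast; nlinarith
  have hmin : 0 < min x 1 := lt_min hx one_pos
  have hxn : (0:ℝ) < x + n := by positivity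
  have hn1 : (0:ℝ) < (n:ℝ) + 1 := by positivity
  rw [div_le_iff₀ (by positivity)]
  have h1 : (1:ℝ)/(min x 1) ≤ max 1 (1/x) := by
    rcases le_total x 1 with h | h
    · rw [min_eq_left h]; exact le_max_right _ _
    · rw [min_eq_right h]; simpa using le_max_left _ _
  have h2 : x + n ≥ min x 1 * (n+1) := hm
  -- 1 ≤ (max 1 (1/x))^2 / (n+1)^2 * (x+n)^2
  have key : (n+1:ℝ)^2 ≤ (max 1 (1/x))^2 * (x+n)^2 := by
    have : (n+1:ℝ) ≤ max 1 (1/x) * (x+n) := by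
      calc (n+1:ℝ) = (1/(min x 1)) * (min x 1 * (n+1)) := by field_simp
        _ ≤ max 1 (1/x) * (x+n) := by
            apply mul_le_mul h1 hm (by positivity) (by positivity)
    nlinarith [sq_nonneg (max 1 (1/x) * (x+n))]
  calc (1:ℝ) = (n+1)^2 * (1/(n+1)^2) := by field_simp
    _ ≤ ((max 1 (1/x))^2 * (x+n)^2) * (1/(n+1)^2) := by
        exact mul_le_mul_of_nonneg_right key (by positivity)
    _ = (max 1 (1/x))^2 * (1/(n+1)^2) * (x+n)^2 := by ring

lemma summable_cube (x : ℝ) (hx : 0 < x) : Summable (fun n : ℕ => 1 / (x + n) ^ 3) := by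
  apply Summable.of_nonneg_of_le (fun n => by positivity) (fun n => ?_)
    ((summable_sq x hx).mul_left (1/x))
  have hxn : (0:ℝ) < x + n := by positivity
  have hxx : x ≤ x + n := by simp [Nat.cast_nonneg]
  rw [show (1:ℝ)/x * (1/(x+n)^2) = 1/(x*(x+n)^2) by field_simp,
    div_le_div_iff₀ (by positivity) (by positivity)]
  nlinarith [sq_nonneg (x+n), pow_pos hxn 2]

lemma hasSum_telescope (f : ℕ → ℝ) (hdec : ∀ n, f (n+1) ≤ f n) (h0 : Tendsto f atTop (𝓝 0)) :
    HasSum (fun n => f n - f (n+1)) (f 0) := by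
  have hn : ∀ n, 0 ≤ f n - f (n+1) := fun n => sub_nonneg.mpr (hdec n)
  rw [hasSum_iff_tendsto_nat_of_nonneg hn]
  have : (fun n => ∑ i ∈ Finset.range n, (f i - f (i+1))) = fun n => f 0 - f n := by
    funext n; exact Finset.sum_range_sub' f n
  rw [this]
  simpa using tendsto_const_nhds.sub h0

lemma tendsto_aux (x : ℝ) (hx : 0 < x) (k : ℕ) (hk : 0 < k) :
    Tendsto (fun n : ℕ => 1 / (x + n) ^ k) atTop (𝓝 0) := by
  have h1 : Tendsto (fun n : ℕ => ((x + n) ^ k : ℝ)) atTop atTop :=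
    (tendsto_pow_atTop hk.ne').comp
      (tendsto_atTop_add_const_left atTop x tendsto_natCast_atTop_atTop)
  have h2 : Tendsto (fun n : ℕ => ((x + n) ^ k : ℝ)⁻¹) atTop (𝓝 0) := h1.inv_tendsto_atTop
  simpa [one_div] using h2

lemma step_sq (y : ℝ) (hy : 0 < y) :
    1/y^2 ≤ (1/y + 1/y^2) - (1/(y+1) + 1/(y+1)^2) := by
  have hy1 : (0:ℝ) < y + 1 := by linarith
  rw [← sub_nonneg]
  have key : (1/y + 1/y^2) - (1/(y+1) + 1/(y+1)^2) - 1/y^2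
      = y / (y^2 * (y+1)^2) := by field_simp; ring
  rw [key]; positivity

lemma step_cube (y : ℝ) (hy : 0 < y) :
    (1/(2*y^2) + 1/(2*y^3)) - (1/(2*(y+1)^2) + 1/(2*(y+1)^3)) ≤ 1/y^3 := by
  have hy1 : (0:ℝ) < y + 1 := by linarith
  rw [← sub_nonneg]
  have key : 1/y^3 - ((1/(2*y^2) + 1/(2*y^3)) - (1/(2*(y+1)^2) + 1/(2*(y+1)^3)))
      = (2*y + 1) / (2 * y^3 * (y+1)^3) := by field_simp; ring
  rw [key]; positivity

lemma sq_sum_le (x : ℝ) (hx : 0 < x) : (∑' n : ℕ, 1/(x+n)^2) ≤ 1/x + 1/x^2 := by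
  set f : ℕ → ℝ := fun n => 1/(x+(n:ℝ)) + 1/(x+(n:ℝ))^2 with hf
  have hdec : ∀ n, f (n+1) ≤ f n := by
    intro n
    have h1 : (0:ℝ) < x + n := by positivity
    simp only [hf]; push_cast
    gcongr <;> linarith
  have h0 : Tendsto f atTop (𝓝 (0+0)) := by
    apply Tendsto.add
    · simpa using tendsto_aux x hx 1 one_pos
    · exact tendsto_aux x hx 2 (by norm_num)
  rw [add_zero] at h0
  have hts := hasSum_telescope f hdec h0
  have hstep : ∀ n : ℕ, 1/(x+(n:ℝ))^2 ≤ f n - f (n+1) := by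
    intro n
    have := step_sq (x+n) (by positivity)
    simp only [hf]; push_cast
    convert this using 3 <;> ring
  calc (∑' n:ℕ, 1/(x+n)^2) ≤ ∑' n, (f n - f (n+1)) :=
      Summable.tsum_le_tsum hstep (summable_sq x hx) hts.summable
    _ = f 0 := hts.tsum_eq
    _ = 1/x + 1/x^2 := by simp [hf]

lemma cube_sum_ge (x : ℝ) (hx : 0 < x) : 1/(2*x^2) + 1/(2*x^3) ≤ ∑' n : ℕ, 1/(x+n)^3 := by
  set f : ℕ → ℝ := fun n => 1/(2*(x+(n:ℝ))^2) + 1/(2*(x+(n:ℝ))^3) with hf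
  have hdec : ∀ n, f (n+1) ≤ f n := by
    intro n
    have h1 : (0:ℝ) < x + n := by positivity
    simp only [hf]; push_cast
    gcongr <;> linarith
  have h0 : Tendsto f atTop (𝓝 ((0:ℝ)/2 + 0/2)) := by
    apply Tendsto.add
    · simpa [div_eq_mul_inv, one_div, mul_comm] using
        ((tendsto_aux x hx 2 (by norm_num)).div_const 2)
    · simpa [div_eq_mul_inv, one_div, mul_comm] using
        ((tendsto_aux x hx 3 (by norm_num)).div_const 2)
  norm_num at h0
  have hts := hasSum_telescope f hdec h0
  have hstep : ∀ n : ℕ, f n - f (n+1) ≤ 1/(x+(n:ℝ))^3 := by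
    intro n
    have := step_cube (x+n) (by positivity)
    simp only [hf]; push_cast
    convert this using 3 <;> ring
  calc 1/(2*x^2) + 1/(2*x^3) = f 0 := by simp [hf]
    _ = ∑' n, (f n - f (n+1)) := hts.tsum_eq.symm
    _ ≤ ∑' n : ℕ, 1/(x+n)^3 := Summable.tsum_le_tsum hstep hts.summable (summable_cube x hx)

lemma term_hasDerivAt (n : ℕ) (t : ℝ) (ht : 0 < t) :
    HasDerivAt (fun y : ℝ => 1/(y+(n:ℝ))^2) (-2/(t+(n:ℝ))^3) t := by
  have htn : (0:ℝ) < t + n := by positivity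
  have h1 : HasDerivAt (fun y : ℝ => y + (n:ℝ)) 1 t := (hasDerivAt_id t).add_const _
  have h2 : HasDerivAt (fun y : ℝ => (y+(n:ℝ))^2) (2*(t+(n:ℝ))) t := by
    have := h1.pow 2
    show HasDerivAt ((fun y : ℝ => y + (n:ℝ))^2) (2*(t+(n:ℝ))) t
    simpa using this
  have h3 := h2.inv (by positivity)
  have heq : -(2*(t+(n:ℝ))) / ((t+(n:ℝ))^2)^2 = -2/(t+(n:ℝ))^3 := by
    field_simp
  rw [heq] at h3
  have h4 : HasDerivAt (fun y : ℝ => ((y+(n:ℝ))^2)⁻¹) (-2/(t+(n:ℝ))^3) t := h3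
  simpa [one_div] using h4

set_option maxHeartbeats 1000000 in
lemma trigamma_hasDerivAt (x : ℝ) (hx : 0 < x) :
    HasDerivAt (fun y => ∑' n : ℕ, 1/(y+(n:ℝ))^2) (∑' n : ℕ, -2/(x+(n:ℝ))^3) x := by
  have hc : (0:ℝ) < x/2 := by linarith
  have hbound : ∀ (n : ℕ), ∀ y ∈ Ioi (x/2), ‖-2/(y+(n:ℝ))^3‖ ≤ 2/(x/2+(n:ℝ))^3 := by
    intro n y hy
    have hy' : x/2 < y := hy
    have hn0 : (0:ℝ) ≤ (n:ℝ) := Nat.cast_nonneg n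
    have h1 : (0:ℝ) < y + n := by linarith
    have h2 : x/2 + n ≤ y + n := by linarith
    rw [norm_div, norm_neg]
    simp only [Real.norm_ofNat, Real.norm_eq_abs, abs_of_pos (pow_pos h1 3)]
    gcongr
  have hu : Summable (fun n : ℕ => 2/(x/2+(n:ℝ))^3) := by
    have := (summable_cube (x/2) hc).mul_left 2
    simpa [div_eq_mul_inv] using this
  have hunif : TendstoUniformlyOn (fun N y => ∑ n ∈ Finset.range N, -2/(y+(n:ℝ))^3)
      (fun y => ∑' n : ℕ, -2/(y+(n:ℝ))^3) atTop (Ioi (x/2)) :=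
    tendstoUniformlyOn_tsum_nat hu hbound
  refine hasDerivAt_of_tendstoUniformlyOn (l := atTop)
    (f := fun N y => ∑ n ∈ Finset.range N, 1/(y+(n:ℝ))^2)
    (g := fun y => ∑' n : ℕ, 1/(y+(n:ℝ))^2)
    (isOpen_Ioi (a := x/2)) hunif ?_ ?_ (by simp only [Set.mem_Ioi]; linarith)
  · filter_upwards with N t ht
    exact HasDerivAt.fun_sum (fun n _ => term_hasDerivAt n t (lt_trans hc ht))
  · intro t ht
    exact ((summable_sq t (lt_trans hc ht)).hasSum).tendsto_sum_nat

/-- The trigamma function ψ'(x) = ∑ₙ 1/(x+n)². -/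
noncomputable def trigamma (x : ℝ) : ℝ := ∑' n : ℕ, 1 / (x + n) ^ 2

lemma trigamma_pos (x : ℝ) (hx : 0 < x) : 0 < trigamma x := by
  refine Summable.tsum_pos (summable_sq x hx) (fun n => by positivity) 0 ?_
  norm_num
  positivity

lemma mul_trigamma_anti : AntitoneOn (fun y => y * trigamma y) (Ioi 0) := by
  have hderiv : ∀ t ∈ Ioi (0:ℝ), HasDerivAt (fun y => y * trigamma y)
      (trigamma t + t * ∑' n : ℕ, -2/(t+(n:ℝ))^3) t := by
    intro t ht
    have h := (hasDerivAt_id t).mul (trigamma_hasDerivAt t ht)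
    have h' : HasDerivAt (fun y => y * ∑' n : ℕ, 1/(y+(n:ℝ))^2)
        (1 * (∑' n : ℕ, 1/(t+(n:ℝ))^2) + t * ∑' n : ℕ, -2/(t+(n:ℝ))^3) t := h
    simpa [trigamma] using h'
  have hnonpos : ∀ t ∈ Ioi (0:ℝ), trigamma t + t * ∑' n : ℕ, -2/(t+(n:ℝ))^3 ≤ 0 := by
    intro t ht
    have ht' : (0:ℝ) < t := ht
    have h1 : trigamma t ≤ 1/t + 1/t^2 := sq_sum_le t ht'
    have h2 : 1/(2*t^2) + 1/(2*t^3) ≤ ∑' n : ℕ, 1/(t+(n:ℝ))^3 := cube_sum_ge t ht'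
    have h3 : (∑' n : ℕ, -2/(t+(n:ℝ))^3) = -2 * ∑' n : ℕ, 1/(t+(n:ℝ))^3 := by
      rw [← tsum_mul_left]; congr 1; funext n; ring
    rw [h3]
    have h4 : t * (-2 * ∑' n : ℕ, 1/(t+(n:ℝ))^3) ≤ t * (-2 * (1/(2*t^2)+1/(2*t^3))) := by
      apply mul_le_mul_of_nonneg_left _ ht'.le
      linarith
    have heq : t * (-2 * (1/(2*t^2)+1/(2*t^3))) = -(1/t + 1/t^2) := by
      field_simp
    linarith [heq ▸ h4]
  apply antitoneOn_of_deriv_nonpos (convex_Ioi 0)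
  · intro t ht
    exact (hderiv t ht).continuousAt.continuousWithinAt
  · intro t ht
    rw [interior_Ioi] at ht
    exact (hderiv t ht).differentiableAt.differentiableWithinAt
  · intro t ht
    rw [interior_Ioi] at ht
    rw [(hderiv t ht).deriv]
    exact hnonpos t ht

/-- The subadditivity-type inequality 1/ψ'(a) + 1/ψ'(b) ≤ 1/ψ'(a+b) for a, b > 0. -/
theorem one_div_trigamma_superadditive (a b : ℝ) (ha : 0 < a) (hb : 0 < b) :
    1 / trigamma a + 1 / trigamma b ≤ 1 / trigamma (a + b) := by
  have hs : 0 < a + b := by linarith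
  have hpa := trigamma_pos a ha
  have hpb := trigamma_pos b hb
  have hps := trigamma_pos (a+b) hs
  have h1 : (a+b) * trigamma (a+b) ≤ a * trigamma a :=
    mul_trigamma_anti (mem_Ioi.mpr ha) (mem_Ioi.mpr hs) (by linarith)
  have h2 : (a+b) * trigamma (a+b) ≤ b * trigamma b :=
    mul_trigamma_anti (mem_Ioi.mpr hb) (mem_Ioi.mpr hs) (by linarith)
  have hpos : (0:ℝ) < (a+b) * trigamma (a+b) := mul_pos hs hps
  have e1 : 1 / trigamma a = a / (a * trigamma a) := by
    rw [eq_div_iff (by positivity)]; field_simp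
  have e2 : 1 / trigamma b = b / (b * trigamma b) := by
    rw [eq_div_iff (by positivity)]; field_simp
  rw [e1, e2]
  calc a / (a * trigamma a) + b / (b * trigamma b)
      ≤ a / ((a+b) * trigamma (a+b)) + b / ((a+b) * trigamma (a+b)) := by
        gcongr
    _ = 1 / trigamma (a+b) := by
        rw [← add_div, div_eq_div_iff (by positivity) (by positivity)]
        ring
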